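/- arXiv:math/9910017 — 2 statements merged into one kernel-verified Lean document; each statement's English description precedes it below -/
import Mathlib

section
/- The t-constant part of the d = 4 product R₄ (three factors as specified) equals Poly₄ = (3x³+13x²y+13xy²+3y³)/32 + [(x²+4xy+3y²)/8 + ((3x+11y)/18)z₁ + (2/9)z₁²]z₁ + [(3x²+10xy+3y²)/16 + ((3x+3y)/8)z₂ + (1/4)z₂²]z₂ + [(3x²+4xy+y²)/8 + ((11x+3y)/18)z₃ + (2/9)z₃²]z₃ + ((3x+y)/4 + z₂/2 + z₃/3)z₂z₃ + ((x+y)/2 + 2z₁/3 + 2z₃/3)z₁z₃ + ((x+3y)/4 + z₁/3 + z₂/2)z₁z₂ + z₁z₂z₃. -/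
open MvPolynomial


lemma cf_aux (a : ℝ) (i j k : ℕ) :
    MvPolynomial.coeff (Finsupp.single 0 2 + Finsupp.single 1 2 + Finsupp.single 2 2)
      (C a * X 0 ^ i * X 1 ^ j * X 2 ^ k : MvPolynomial ℕ ℝ) =
    if i = 2 ∧ j = 2 ∧ k = 2 then a else 0 := by
  simp only [X_pow_eq_monomial, C_apply, monomial_mul, one_mul, mul_one, zero_add]
  rw [coeff_monomial]
  by_cases h : i = 2 ∧ j = 2 ∧ k = 2
  · obtain ⟨rfl, rfl, rfl⟩ := h
    simp
  · rw [if_neg h, if_neg]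
    intro he
    refine h ⟨?_, ?_, ?_⟩
    · simpa [Finsupp.single_apply] using (DFunLike.congr_fun he 0)
    · simpa [Finsupp.single_apply] using (DFunLike.congr_fun he 1)
    · simpa [Finsupp.single_apply] using (DFunLike.congr_fun he 2)


set_option maxHeartbeats 1000000 in
lemma expandOpt0 {R : Type*} [CommRing R]
    (t0 t1 t2 u a2 b2 c2 d2 e2 f2 a3 b3 c3 d3 e3 f3 : R) :
    u * t0 ^ 2 *
        (a2 * t1 ^ 2 + b2 * t1 - c2 + d2 + e2 * t1 ^ 2 * t0 + f2 * t1 ^ 2 * t2) *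
        (a3 * t2 ^ 2 + b3 * t2 - c3 + d3 + e3 * t2 ^ 2 * t0 + f3 * t2 ^ 2 * t1) =
      u * a2 * a3 * t0 ^ 2 * t1 ^ 2 * t2 ^ 2 
      + u * a2 * b3 * t0 ^ 2 * t1 ^ 2 * t2 ^ 1 
      - u * a2 * c3 * t0 ^ 2 * t1 ^ 2 * t2 ^ 0 
      + u * a2 * d3 * t0 ^ 2 * t1 ^ 2 * t2 ^ 0 
      + u * a2 * e3 * t0 ^ 3 * t1 ^ 2 * t2 ^ 2 
      + u * a2 * f3 * t0 ^ 2 * t1 ^ 3 * t2 ^ 2 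
      + u * b2 * a3 * t0 ^ 2 * t1 ^ 1 * t2 ^ 2 
      + u * b2 * b3 * t0 ^ 2 * t1 ^ 1 * t2 ^ 1 
      - u * b2 * c3 * t0 ^ 2 * t1 ^ 1 * t2 ^ 0 
      + u * b2 * d3 * t0 ^ 2 * t1 ^ 1 * t2 ^ 0 
      + u * b2 * e3 * t0 ^ 3 * t1 ^ 1 * t2 ^ 2 
      + u * b2 * f3 * t0 ^ 2 * t1 ^ 2 * t2 ^ 2 
      - u * c2 * a3 * t0 ^ 2 * t1 ^ 0 * t2 ^ 2 
      - u * c2 * b3 * t0 ^ 2 * t1 ^ 0 * t2 ^ 1 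
      + u * c2 * c3 * t0 ^ 2 * t1 ^ 0 * t2 ^ 0 
      - u * c2 * d3 * t0 ^ 2 * t1 ^ 0 * t2 ^ 0 
      - u * c2 * e3 * t0 ^ 3 * t1 ^ 0 * t2 ^ 2 
      - u * c2 * f3 * t0 ^ 2 * t1 ^ 1 * t2 ^ 2 
      + u * d2 * a3 * t0 ^ 2 * t1 ^ 0 * t2 ^ 2 
      + u * d2 * b3 * t0 ^ 2 * t1 ^ 0 * t2 ^ 1 
      - u * d2 * c3 * t0 ^ 2 * t1 ^ 0 * t2 ^ 0 
      + u * d2 * d3 * t0 ^ 2 * t1 ^ 0 * t2 ^ 0 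
      + u * d2 * e3 * t0 ^ 3 * t1 ^ 0 * t2 ^ 2 
      + u * d2 * f3 * t0 ^ 2 * t1 ^ 1 * t2 ^ 2 
      + u * e2 * a3 * t0 ^ 3 * t1 ^ 2 * t2 ^ 2 
      + u * e2 * b3 * t0 ^ 3 * t1 ^ 2 * t2 ^ 1 
      - u * e2 * c3 * t0 ^ 3 * t1 ^ 2 * t2 ^ 0 
      + u * e2 * d3 * t0 ^ 3 * t1 ^ 2 * t2 ^ 0 
      + u * e2 * e3 * t0 ^ 4 * t1 ^ 2 * t2 ^ 2 
      + u * e2 * f3 * t0 ^ 3 * t1 ^ 3 * t2 ^ 2 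
      + u * f2 * a3 * t0 ^ 2 * t1 ^ 2 * t2 ^ 3 
      + u * f2 * b3 * t0 ^ 2 * t1 ^ 2 * t2 ^ 2 
      - u * f2 * c3 * t0 ^ 2 * t1 ^ 2 * t2 ^ 1 
      + u * f2 * d3 * t0 ^ 2 * t1 ^ 2 * t2 ^ 1 
      + u * f2 * e3 * t0 ^ 3 * t1 ^ 2 * t2 ^ 3 
      + u * f2 * f3 * t0 ^ 2 * t1 ^ 3 * t2 ^ 3 := by
  ring

set_option maxHeartbeats 1000000 in
lemma expandOpt1 {R : Type*} [CommRing R]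
    (t0 t1 t2 u a2 b2 c2 d2 e2 f2 a3 b3 c3 d3 e3 f3 : R) :
    u * t0 *
        (a2 * t1 ^ 2 + b2 * t1 - c2 + d2 + e2 * t1 ^ 2 * t0 + f2 * t1 ^ 2 * t2) *
        (a3 * t2 ^ 2 + b3 * t2 - c3 + d3 + e3 * t2 ^ 2 * t0 + f3 * t2 ^ 2 * t1) =
      u * a2 * a3 * t0 ^ 1 * t1 ^ 2 * t2 ^ 2 
      + u * a2 * b3 * t0 ^ 1 * t1 ^ 2 * t2 ^ 1 
      - u * a2 * c3 * t0 ^ 1 * t1 ^ 2 * t2 ^ 0 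
      + u * a2 * d3 * t0 ^ 1 * t1 ^ 2 * t2 ^ 0 
      + u * a2 * e3 * t0 ^ 2 * t1 ^ 2 * t2 ^ 2 
      + u * a2 * f3 * t0 ^ 1 * t1 ^ 3 * t2 ^ 2 
      + u * b2 * a3 * t0 ^ 1 * t1 ^ 1 * t2 ^ 2 
      + u * b2 * b3 * t0 ^ 1 * t1 ^ 1 * t2 ^ 1 
      - u * b2 * c3 * t0 ^ 1 * t1 ^ 1 * t2 ^ 0 
      + u * b2 * d3 * t0 ^ 1 * t1 ^ 1 * t2 ^ 0 
      + u * b2 * e3 * t0 ^ 2 * t1 ^ 1 * t2 ^ 2 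
      + u * b2 * f3 * t0 ^ 1 * t1 ^ 2 * t2 ^ 2 
      - u * c2 * a3 * t0 ^ 1 * t1 ^ 0 * t2 ^ 2 
      - u * c2 * b3 * t0 ^ 1 * t1 ^ 0 * t2 ^ 1 
      + u * c2 * c3 * t0 ^ 1 * t1 ^ 0 * t2 ^ 0 
      - u * c2 * d3 * t0 ^ 1 * t1 ^ 0 * t2 ^ 0 
      - u * c2 * e3 * t0 ^ 2 * t1 ^ 0 * t2 ^ 2 
      - u * c2 * f3 * t0 ^ 1 * t1 ^ 1 * t2 ^ 2 
      + u * d2 * a3 * t0 ^ 1 * t1 ^ 0 * t2 ^ 2 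
      + u * d2 * b3 * t0 ^ 1 * t1 ^ 0 * t2 ^ 1 
      - u * d2 * c3 * t0 ^ 1 * t1 ^ 0 * t2 ^ 0 
      + u * d2 * d3 * t0 ^ 1 * t1 ^ 0 * t2 ^ 0 
      + u * d2 * e3 * t0 ^ 2 * t1 ^ 0 * t2 ^ 2 
      + u * d2 * f3 * t0 ^ 1 * t1 ^ 1 * t2 ^ 2 
      + u * e2 * a3 * t0 ^ 2 * t1 ^ 2 * t2 ^ 2 
      + u * e2 * b3 * t0 ^ 2 * t1 ^ 2 * t2 ^ 1 
      - u * e2 * c3 * t0 ^ 2 * t1 ^ 2 * t2 ^ 0 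
      + u * e2 * d3 * t0 ^ 2 * t1 ^ 2 * t2 ^ 0 
      + u * e2 * e3 * t0 ^ 3 * t1 ^ 2 * t2 ^ 2 
      + u * e2 * f3 * t0 ^ 2 * t1 ^ 3 * t2 ^ 2 
      + u * f2 * a3 * t0 ^ 1 * t1 ^ 2 * t2 ^ 3 
      + u * f2 * b3 * t0 ^ 1 * t1 ^ 2 * t2 ^ 2 
      - u * f2 * c3 * t0 ^ 1 * t1 ^ 2 * t2 ^ 1 
      + u * f2 * d3 * t0 ^ 1 * t1 ^ 2 * t2 ^ 1 
      + u * f2 * e3 * t0 ^ 2 * t1 ^ 2 * t2 ^ 3 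
      + u * f2 * f3 * t0 ^ 1 * t1 ^ 3 * t2 ^ 3 := by
  ring

set_option maxHeartbeats 1000000 in
lemma expandOpt2 {R : Type*} [CommRing R]
    (t0 t1 t2 u a2 b2 c2 d2 e2 f2 a3 b3 c3 d3 e3 f3 : R) :
    u *
        (a2 * t1 ^ 2 + b2 * t1 - c2 + d2 + e2 * t1 ^ 2 * t0 + f2 * t1 ^ 2 * t2) *
        (a3 * t2 ^ 2 + b3 * t2 - c3 + d3 + e3 * t2 ^ 2 * t0 + f3 * t2 ^ 2 * t1) =
      u * a2 * a3 * t0 ^ 0 * t1 ^ 2 * t2 ^ 2 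
      + u * a2 * b3 * t0 ^ 0 * t1 ^ 2 * t2 ^ 1 
      - u * a2 * c3 * t0 ^ 0 * t1 ^ 2 * t2 ^ 0 
      + u * a2 * d3 * t0 ^ 0 * t1 ^ 2 * t2 ^ 0 
      + u * a2 * e3 * t0 ^ 1 * t1 ^ 2 * t2 ^ 2 
      + u * a2 * f3 * t0 ^ 0 * t1 ^ 3 * t2 ^ 2 
      + u * b2 * a3 * t0 ^ 0 * t1 ^ 1 * t2 ^ 2 
      + u * b2 * b3 * t0 ^ 0 * t1 ^ 1 * t2 ^ 1 
      - u * b2 * c3 * t0 ^ 0 * t1 ^ 1 * t2 ^ 0 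
      + u * b2 * d3 * t0 ^ 0 * t1 ^ 1 * t2 ^ 0 
      + u * b2 * e3 * t0 ^ 1 * t1 ^ 1 * t2 ^ 2 
      + u * b2 * f3 * t0 ^ 0 * t1 ^ 2 * t2 ^ 2 
      - u * c2 * a3 * t0 ^ 0 * t1 ^ 0 * t2 ^ 2 
      - u * c2 * b3 * t0 ^ 0 * t1 ^ 0 * t2 ^ 1 
      + u * c2 * c3 * t0 ^ 0 * t1 ^ 0 * t2 ^ 0 
      - u * c2 * d3 * t0 ^ 0 * t1 ^ 0 * t2 ^ 0 
      - u * c2 * e3 * t0 ^ 1 * t1 ^ 0 * t2 ^ 2 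
      - u * c2 * f3 * t0 ^ 0 * t1 ^ 1 * t2 ^ 2 
      + u * d2 * a3 * t0 ^ 0 * t1 ^ 0 * t2 ^ 2 
      + u * d2 * b3 * t0 ^ 0 * t1 ^ 0 * t2 ^ 1 
      - u * d2 * c3 * t0 ^ 0 * t1 ^ 0 * t2 ^ 0 
      + u * d2 * d3 * t0 ^ 0 * t1 ^ 0 * t2 ^ 0 
      + u * d2 * e3 * t0 ^ 1 * t1 ^ 0 * t2 ^ 2 
      + u * d2 * f3 * t0 ^ 0 * t1 ^ 1 * t2 ^ 2 
      + u * e2 * a3 * t0 ^ 1 * t1 ^ 2 * t2 ^ 2 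
      + u * e2 * b3 * t0 ^ 1 * t1 ^ 2 * t2 ^ 1 
      - u * e2 * c3 * t0 ^ 1 * t1 ^ 2 * t2 ^ 0 
      + u * e2 * d3 * t0 ^ 1 * t1 ^ 2 * t2 ^ 0 
      + u * e2 * e3 * t0 ^ 2 * t1 ^ 2 * t2 ^ 2 
      + u * e2 * f3 * t0 ^ 1 * t1 ^ 3 * t2 ^ 2 
      + u * f2 * a3 * t0 ^ 0 * t1 ^ 2 * t2 ^ 3 
      + u * f2 * b3 * t0 ^ 0 * t1 ^ 2 * t2 ^ 2 
      - u * f2 * c3 * t0 ^ 0 * t1 ^ 2 * t2 ^ 1 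
      + u * f2 * d3 * t0 ^ 0 * t1 ^ 2 * t2 ^ 1 
      + u * f2 * e3 * t0 ^ 1 * t1 ^ 2 * t2 ^ 3 
      + u * f2 * f3 * t0 ^ 0 * t1 ^ 3 * t2 ^ 3 := by
  ring

set_option maxHeartbeats 1000000 in
lemma expandOpt4 {R : Type*} [CommRing R]
    (t0 t1 t2 u a2 b2 c2 d2 e2 f2 a3 b3 c3 d3 e3 f3 : R) :
    u * t0 ^ 2 * t1 *
        (a2 * t1 ^ 2 + b2 * t1 - c2 + d2 + e2 * t1 ^ 2 * t0 + f2 * t1 ^ 2 * t2) *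
        (a3 * t2 ^ 2 + b3 * t2 - c3 + d3 + e3 * t2 ^ 2 * t0 + f3 * t2 ^ 2 * t1) =
      u * a2 * a3 * t0 ^ 2 * t1 ^ 3 * t2 ^ 2 
      + u * a2 * b3 * t0 ^ 2 * t1 ^ 3 * t2 ^ 1 
      - u * a2 * c3 * t0 ^ 2 * t1 ^ 3 * t2 ^ 0 
      + u * a2 * d3 * t0 ^ 2 * t1 ^ 3 * t2 ^ 0 
      + u * a2 * e3 * t0 ^ 3 * t1 ^ 3 * t2 ^ 2 
      + u * a2 * f3 * t0 ^ 2 * t1 ^ 4 * t2 ^ 2 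
      + u * b2 * a3 * t0 ^ 2 * t1 ^ 2 * t2 ^ 2 
      + u * b2 * b3 * t0 ^ 2 * t1 ^ 2 * t2 ^ 1 
      - u * b2 * c3 * t0 ^ 2 * t1 ^ 2 * t2 ^ 0 
      + u * b2 * d3 * t0 ^ 2 * t1 ^ 2 * t2 ^ 0 
      + u * b2 * e3 * t0 ^ 3 * t1 ^ 2 * t2 ^ 2 
      + u * b2 * f3 * t0 ^ 2 * t1 ^ 3 * t2 ^ 2 
      - u * c2 * a3 * t0 ^ 2 * t1 ^ 1 * t2 ^ 2 
      - u * c2 * b3 * t0 ^ 2 * t1 ^ 1 * t2 ^ 1 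
      + u * c2 * c3 * t0 ^ 2 * t1 ^ 1 * t2 ^ 0 
      - u * c2 * d3 * t0 ^ 2 * t1 ^ 1 * t2 ^ 0 
      - u * c2 * e3 * t0 ^ 3 * t1 ^ 1 * t2 ^ 2 
      - u * c2 * f3 * t0 ^ 2 * t1 ^ 2 * t2 ^ 2 
      + u * d2 * a3 * t0 ^ 2 * t1 ^ 1 * t2 ^ 2 
      + u * d2 * b3 * t0 ^ 2 * t1 ^ 1 * t2 ^ 1 
      - u * d2 * c3 * t0 ^ 2 * t1 ^ 1 * t2 ^ 0 
      + u * d2 * d3 * t0 ^ 2 * t1 ^ 1 * t2 ^ 0 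
      + u * d2 * e3 * t0 ^ 3 * t1 ^ 1 * t2 ^ 2 
      + u * d2 * f3 * t0 ^ 2 * t1 ^ 2 * t2 ^ 2 
      + u * e2 * a3 * t0 ^ 3 * t1 ^ 3 * t2 ^ 2 
      + u * e2 * b3 * t0 ^ 3 * t1 ^ 3 * t2 ^ 1 
      - u * e2 * c3 * t0 ^ 3 * t1 ^ 3 * t2 ^ 0 
      + u * e2 * d3 * t0 ^ 3 * t1 ^ 3 * t2 ^ 0 
      + u * e2 * e3 * t0 ^ 4 * t1 ^ 3 * t2 ^ 2 
      + u * e2 * f3 * t0 ^ 3 * t1 ^ 4 * t2 ^ 2 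
      + u * f2 * a3 * t0 ^ 2 * t1 ^ 3 * t2 ^ 3 
      + u * f2 * b3 * t0 ^ 2 * t1 ^ 3 * t2 ^ 2 
      - u * f2 * c3 * t0 ^ 2 * t1 ^ 3 * t2 ^ 1 
      + u * f2 * d3 * t0 ^ 2 * t1 ^ 3 * t2 ^ 1 
      + u * f2 * e3 * t0 ^ 3 * t1 ^ 3 * t2 ^ 3 
      + u * f2 * f3 * t0 ^ 2 * t1 ^ 4 * t2 ^ 3 := by
  ring

set_option maxHeartbeats 1000000 in
lemma expandOpt5 {R : Type*} [CommRing R]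
    (t0 t1 t2 u a2 b2 c2 d2 e2 f2 a3 b3 c3 d3 e3 f3 : R) :
    u * t0 ^ 2 * t2 *
        (a2 * t1 ^ 2 + b2 * t1 - c2 + d2 + e2 * t1 ^ 2 * t0 + f2 * t1 ^ 2 * t2) *
        (a3 * t2 ^ 2 + b3 * t2 - c3 + d3 + e3 * t2 ^ 2 * t0 + f3 * t2 ^ 2 * t1) =
      u * a2 * a3 * t0 ^ 2 * t1 ^ 2 * t2 ^ 3 
      + u * a2 * b3 * t0 ^ 2 * t1 ^ 2 * t2 ^ 2 
      - u * a2 * c3 * t0 ^ 2 * t1 ^ 2 * t2 ^ 1 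
      + u * a2 * d3 * t0 ^ 2 * t1 ^ 2 * t2 ^ 1 
      + u * a2 * e3 * t0 ^ 3 * t1 ^ 2 * t2 ^ 3 
      + u * a2 * f3 * t0 ^ 2 * t1 ^ 3 * t2 ^ 3 
      + u * b2 * a3 * t0 ^ 2 * t1 ^ 1 * t2 ^ 3 
      + u * b2 * b3 * t0 ^ 2 * t1 ^ 1 * t2 ^ 2 
      - u * b2 * c3 * t0 ^ 2 * t1 ^ 1 * t2 ^ 1 
      + u * b2 * d3 * t0 ^ 2 * t1 ^ 1 * t2 ^ 1 
      + u * b2 * e3 * t0 ^ 3 * t1 ^ 1 * t2 ^ 3 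
      + u * b2 * f3 * t0 ^ 2 * t1 ^ 2 * t2 ^ 3 
      - u * c2 * a3 * t0 ^ 2 * t1 ^ 0 * t2 ^ 3 
      - u * c2 * b3 * t0 ^ 2 * t1 ^ 0 * t2 ^ 2 
      + u * c2 * c3 * t0 ^ 2 * t1 ^ 0 * t2 ^ 1 
      - u * c2 * d3 * t0 ^ 2 * t1 ^ 0 * t2 ^ 1 
      - u * c2 * e3 * t0 ^ 3 * t1 ^ 0 * t2 ^ 3 
      - u * c2 * f3 * t0 ^ 2 * t1 ^ 1 * t2 ^ 3 
      + u * d2 * a3 * t0 ^ 2 * t1 ^ 0 * t2 ^ 3 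
      + u * d2 * b3 * t0 ^ 2 * t1 ^ 0 * t2 ^ 2 
      - u * d2 * c3 * t0 ^ 2 * t1 ^ 0 * t2 ^ 1 
      + u * d2 * d3 * t0 ^ 2 * t1 ^ 0 * t2 ^ 1 
      + u * d2 * e3 * t0 ^ 3 * t1 ^ 0 * t2 ^ 3 
      + u * d2 * f3 * t0 ^ 2 * t1 ^ 1 * t2 ^ 3 
      + u * e2 * a3 * t0 ^ 3 * t1 ^ 2 * t2 ^ 3 
      + u * e2 * b3 * t0 ^ 3 * t1 ^ 2 * t2 ^ 2 
      - u * e2 * c3 * t0 ^ 3 * t1 ^ 2 * t2 ^ 1 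
      + u * e2 * d3 * t0 ^ 3 * t1 ^ 2 * t2 ^ 1 
      + u * e2 * e3 * t0 ^ 4 * t1 ^ 2 * t2 ^ 3 
      + u * e2 * f3 * t0 ^ 3 * t1 ^ 3 * t2 ^ 3 
      + u * f2 * a3 * t0 ^ 2 * t1 ^ 2 * t2 ^ 4 
      + u * f2 * b3 * t0 ^ 2 * t1 ^ 2 * t2 ^ 3 
      - u * f2 * c3 * t0 ^ 2 * t1 ^ 2 * t2 ^ 2 
      + u * f2 * d3 * t0 ^ 2 * t1 ^ 2 * t2 ^ 2 
      + u * f2 * e3 * t0 ^ 3 * t1 ^ 2 * t2 ^ 4 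
      + u * f2 * f3 * t0 ^ 2 * t1 ^ 3 * t2 ^ 4 := by
  ring


set_option maxHeartbeats 1000000 in

/-- The `t`-constant part of the `d = 4` product
`R₄ = A₁·A₂·A₃`, where
`A₁ = (3x+y)/4 + z₁ + (z₁²/t₁)(1−(3x+y)/(4t₁)) + z₁³/t₁² + t₂/2 + t₃/3`,
`A₂ = (x+y)/2 + z₂ + (z₂²/t₂)(1−(x+y)/(2t₂)) + z₂³/t₂² + 2t₁/3 + 2t₃/3`,
`A₃ = (x+3y)/4 + z₃ + (z₃²/t₃)(1−(x+3y)/(4t₃)) + z₃³/t₃² + t₁/3 + t₂/2`,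
equals `Poly₄`.  Multiplying `A_i` by `t_i²` clears denominators, so the constant
part of `R₄` is the coefficient of `t₁²t₂²t₃²` in `(t₁²A₁)(t₂²A₂)(t₃²A₃)`,
with `t₁ = X 0`, `t₂ = X 1`, `t₃ = X 2`. -/
theorem poly_four_eq (x y z₁ z₂ z₃ : ℝ) :
    MvPolynomial.coeff (Finsupp.single 0 2 + Finsupp.single 1 2 + Finsupp.single 2 2)
      (((C ((3 * x + y) / 4 + z₁) * X 0 ^ 2 + C (z₁ ^ 2) * X 0 -
          C (z₁ ^ 2 * (3 * x + y) / 4) + C (z₁ ^ 3) +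
          C (1 / 2 : ℝ) * X 0 ^ 2 * X 1 + C (1 / 3 : ℝ) * X 0 ^ 2 * X 2) *
        (C ((x + y) / 2 + z₂) * X 1 ^ 2 + C (z₂ ^ 2) * X 1 -
          C (z₂ ^ 2 * (x + y) / 2) + C (z₂ ^ 3) +
          C (2 / 3 : ℝ) * X 1 ^ 2 * X 0 + C (2 / 3 : ℝ) * X 1 ^ 2 * X 2) *
        (C ((x + 3 * y) / 4 + z₃) * X 2 ^ 2 + C (z₃ ^ 2) * X 2 -
          C (z₃ ^ 2 * (x + 3 * y) / 4) + C (z₃ ^ 3) +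
          C (1 / 3 : ℝ) * X 2 ^ 2 * X 0 + C (1 / 2 : ℝ) * X 2 ^ 2 * X 1) :
          MvPolynomial ℕ ℝ)) =
      (3 * x ^ 3 + 13 * x ^ 2 * y + 13 * x * y ^ 2 + 3 * y ^ 3) / 32 +
        ((x ^ 2 + 4 * x * y + 3 * y ^ 2) / 8 + ((3 * x + 11 * y) / 18) * z₁ +
          (2 / 9) * z₁ ^ 2) * z₁ +
        ((3 * x ^ 2 + 10 * x * y + 3 * y ^ 2) / 16 + ((3 * x + 3 * y) / 8) * z₂ +
          (1 / 4) * z₂ ^ 2) * z₂ +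
        ((3 * x ^ 2 + 4 * x * y + y ^ 2) / 8 + ((11 * x + 3 * y) / 18) * z₃ +
          (2 / 9) * z₃ ^ 2) * z₃ +
        ((3 * x + y) / 4 + z₂ / 2 + z₃ / 3) * z₂ * z₃ +
        ((x + y) / 2 + 2 * z₁ / 3 + 2 * z₃ / 3) * z₁ * z₃ +
        ((x + 3 * y) / 4 + z₁ / 3 + z₂ / 2) * z₁ * z₂ + z₁ * z₂ * z₃ := by
  simp only [add_mul, sub_mul]
  rw [expandOpt0 (X 0) (X 1) (X 2) (C ((3 * x + y) / 4 + z₁)) (C ((x + y) / 2 + z₂)) (C (z₂ ^ 2)) (C (z₂ ^ 2 * (x + y) / 2)) (C (z₂ ^ 3)) (C (2 / 3 : ℝ)) (C (2 / 3 : ℝ)) (C ((x + 3 * y) / 4 + z₃)) (C (z₃ ^ 2)) (C (z₃ ^ 2 * (x + 3 * y) / 4)) (C (z₃ ^ 3)) (C (1 / 3 : ℝ)) (C (1 / 2 : ℝ)),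
    expandOpt1 (X 0) (X 1) (X 2) (C (z₁ ^ 2)) (C ((x + y) / 2 + z₂)) (C (z₂ ^ 2)) (C (z₂ ^ 2 * (x + y) / 2)) (C (z₂ ^ 3)) (C (2 / 3 : ℝ)) (C (2 / 3 : ℝ)) (C ((x + 3 * y) / 4 + z₃)) (C (z₃ ^ 2)) (C (z₃ ^ 2 * (x + 3 * y) / 4)) (C (z₃ ^ 3)) (C (1 / 3 : ℝ)) (C (1 / 2 : ℝ)),
    expandOpt2 (X 0) (X 1) (X 2) (C (z₁ ^ 2 * (3 * x + y) / 4)) (C ((x + y) / 2 + z₂)) (C (z₂ ^ 2)) (C (z₂ ^ 2 * (x + y) / 2)) (C (z₂ ^ 3)) (C (2 / 3 : ℝ)) (C (2 / 3 : ℝ)) (C ((x + 3 * y) / 4 + z₃)) (C (z₃ ^ 2)) (C (z₃ ^ 2 * (x + 3 * y) / 4)) (C (z₃ ^ 3)) (C (1 / 3 : ℝ)) (C (1 / 2 : ℝ)),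
    expandOpt2 (X 0) (X 1) (X 2) (C (z₁ ^ 3)) (C ((x + y) / 2 + z₂)) (C (z₂ ^ 2)) (C (z₂ ^ 2 * (x + y) / 2)) (C (z₂ ^ 3)) (C (2 / 3 : ℝ)) (C (2 / 3 : ℝ)) (C ((x + 3 * y) / 4 + z₃)) (C (z₃ ^ 2)) (C (z₃ ^ 2 * (x + 3 * y) / 4)) (C (z₃ ^ 3)) (C (1 / 3 : ℝ)) (C (1 / 2 : ℝ)),
    expandOpt4 (X 0) (X 1) (X 2) (C (1 / 2 : ℝ)) (C ((x + y) / 2 + z₂)) (C (z₂ ^ 2)) (C (z₂ ^ 2 * (x + y) / 2)) (C (z₂ ^ 3)) (C (2 / 3 : ℝ)) (C (2 / 3 : ℝ)) (C ((x + 3 * y) / 4 + z₃)) (C (z₃ ^ 2)) (C (z₃ ^ 2 * (x + 3 * y) / 4)) (C (z₃ ^ 3)) (C (1 / 3 : ℝ)) (C (1 / 2 : ℝ)),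
    expandOpt5 (X 0) (X 1) (X 2) (C (1 / 3 : ℝ)) (C ((x + y) / 2 + z₂)) (C (z₂ ^ 2)) (C (z₂ ^ 2 * (x + y) / 2)) (C (z₂ ^ 3)) (C (2 / 3 : ℝ)) (C (2 / 3 : ℝ)) (C ((x + 3 * y) / 4 + z₃)) (C (z₃ ^ 2)) (C (z₃ ^ 2 * (x + 3 * y) / 4)) (C (z₃ ^ 3)) (C (1 / 3 : ℝ)) (C (1 / 2 : ℝ))]
  simp only [coeff_add, coeff_sub, ← C_mul, cf_aux]
  norm_num
  ring
end

section
/- For k ≥ 2 and d ≥ 1, the coefficient b_d = a_d·∑_{i=1}^{d}∑_{m=1}^{k−1} m/(i(ki−m)) together with b_0 = 0 makes w₁(x) = ∑_{d≥1} b_d e^{dx} + x·w₀(x) a second formal solution of (D^{k−1} − k e^x (kD+1)···(kD+k−1)) w = 0; equivalently, the b_d satisfy d^{k−1} b_d + (k−1)d^{k−2} a_d = k∏_{m=1}^{k−1}(k(d−1)+m)·b_{d−1} + k(∑_{m=1}^{k−1} ∏_{l≠m}(k(d−1)+l)·k)·a_{d−1} for d ≥ 1. -/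
open Finset

private lemma fact_add_prod (n m : ℕ) :
    Nat.factorial (n + m) = Nat.factorial n * ∏ j ∈ Finset.Icc 1 m, (n + j) := by
  induction m with
  | zero => simp
  | succ m ih =>
    rw [Finset.prod_Icc_succ_top (by omega : 1 ≤ m + 1), ← mul_assoc, ← ih,
      show n + (m + 1) = (n + m) + 1 by ring, Nat.factorial_succ]
    ring

private lemma a_rec (k n : ℕ) (hk : 1 ≤ k) :
    (((n + 1 : ℕ)) : ℚ) ^ (k - 1) *
      ((Nat.factorial (k * (n + 1)) : ℚ) / (Nat.factorial (n + 1) : ℚ) ^ k)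
      = (k : ℚ) * (∏ m ∈ Finset.Icc 1 (k - 1), ((k * n + m : ℕ) : ℚ)) *
        ((Nat.factorial (k * n) : ℚ) / (Nat.factorial n : ℚ) ^ k) := by
  have hsplit : (∏ j ∈ Finset.Icc 1 k, (k * n + j)) =
      (∏ j ∈ Finset.Icc 1 (k - 1), (k * n + j)) * (k * (n + 1)) := by
    have h1 : k - 1 + 1 = k := by omega
    calc (∏ j ∈ Finset.Icc 1 k, (k * n + j))
        = ∏ j ∈ Finset.Icc 1 (k - 1 + 1), (k * n + j) := by rw [h1]
      _ = (∏ j ∈ Finset.Icc 1 (k - 1), (k * n + j)) * (k * n + (k - 1 + 1)) :=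
          Finset.prod_Icc_succ_top (by omega) _
      _ = _ := by rw [h1]; ring
  have hf1 : (Nat.factorial (k * (n + 1)) : ℚ)
      = (Nat.factorial (k * n) : ℚ) * (∏ j ∈ Finset.Icc 1 (k - 1), ((k * n + j : ℕ) : ℚ))
        * ((k : ℚ) * ((n : ℚ) + 1)) := by
    rw [show k * (n + 1) = k * n + k by ring, fact_add_prod, hsplit]
    push_cast
    ring
  have hf2 : (Nat.factorial (n + 1) : ℚ) = ((n : ℚ) + 1) * (Nat.factorial n : ℚ) := by
    rw [Nat.factorial_succ]; push_cast; ring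
  have hn : ((n : ℚ) + 1) ≠ 0 := by positivity
  have hfn : (Nat.factorial n : ℚ) ≠ 0 := by exact_mod_cast Nat.factorial_ne_zero n
  have hk1 : ((n : ℚ) + 1) ^ k = ((n : ℚ) + 1) ^ (k - 1) * ((n : ℚ) + 1) := by
    conv_lhs => rw [show k = (k - 1) + 1 by omega]
    rw [pow_succ]
  rw [show (((n + 1 : ℕ)) : ℚ) = (n : ℚ) + 1 by push_cast; ring, hf1, hf2, mul_pow, hk1]
  field_simp

/-- With `a_d = (kd)!/(d!)^k` and `b_d = a_d·∑_{i=1}^{d}∑_{m=1}^{k−1} m/(i(ki−m))`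
(so `b_0 = 0`), the series `w₁(x) = ∑_{d≥1} b_d e^{dx} + x·w₀(x)` is a second
formal solution of `(D^{k−1} − k e^x (kD+1)···(kD+k−1)) w = 0`; equivalently, for
`d ≥ 1`,
`d^{k−1} b_d + (k−1)d^{k−2} a_d
  = k∏_{m=1}^{k−1}(k(d−1)+m)·b_{d−1} + k(∑_{m=1}^{k−1} ∏_{l≠m}(k(d−1)+l)·k)·a_{d−1}`. -/
theorem hypergeometric_second_solution_recursion (k d : ℕ) (hk : 2 ≤ k) (hd : 1 ≤ d) :
    let a : ℕ → ℚ := fun e => (Nat.factorial (k * e) : ℚ) / (Nat.factorial e : ℚ) ^ k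
    let b : ℕ → ℚ := fun e => a e *
      ∑ i ∈ Finset.Icc 1 e, ∑ m ∈ Finset.Icc 1 (k - 1),
        (m : ℚ) / ((i : ℚ) * ((k * i - m : ℕ) : ℚ))
    (d : ℚ) ^ (k - 1) * b d + ((k : ℚ) - 1) * (d : ℚ) ^ (k - 2) * a d =
      (k : ℚ) * (∏ m ∈ Finset.Icc 1 (k - 1), ((k * (d - 1) + m : ℕ) : ℚ)) * b (d - 1) +
      (k : ℚ) *
        (∑ m ∈ Finset.Icc 1 (k - 1),
          (∏ l ∈ (Finset.Icc 1 (k - 1)).erase m, ((k * (d - 1) + l : ℕ) : ℚ)) * (k : ℚ)) *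
        a (d - 1) := by
  intro a b
  obtain ⟨n, rfl⟩ : ∃ n, d = n + 1 := ⟨d - 1, by omega⟩
  have ha : a = fun e => (Nat.factorial (k * e) : ℚ) / (Nat.factorial e : ℚ) ^ k := rfl
  have hb : b = fun e => a e *
      ∑ i ∈ Finset.Icc 1 e, ∑ m ∈ Finset.Icc 1 (k - 1),
        (m : ℚ) / ((i : ℚ) * ((k * i - m : ℕ) : ℚ)) := rfl
  simp only [hb, ha, Nat.add_sub_cancel]
  set X : ℚ := ((n + 1 : ℕ) : ℚ) with hXdef
  have hX : X ≠ 0 := by rw [hXdef]; exact_mod_cast Nat.succ_ne_zero n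
  set A1 : ℚ := (Nat.factorial (k * (n + 1)) : ℚ) / (Nat.factorial (n + 1) : ℚ) ^ k with hA1
  set A0 : ℚ := (Nat.factorial (k * n) : ℚ) / (Nat.factorial n : ℚ) ^ k with hA0
  set P : ℚ := ∏ m ∈ Finset.Icc 1 (k - 1), ((k * n + m : ℕ) : ℚ) with hPdef
  set S : ℚ := ∑ i ∈ Finset.Icc 1 n, ∑ m ∈ Finset.Icc 1 (k - 1),
      (m : ℚ) / ((i : ℚ) * ((k * i - m : ℕ) : ℚ)) with hSdef
  set Qs : ℚ := ∑ m ∈ Finset.Icc 1 (k - 1),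
      (∏ l ∈ (Finset.Icc 1 (k - 1)).erase m, ((k * n + l : ℕ) : ℚ)) * (k : ℚ) with hQdef
  -- split off the top term of the inner sum at i = n+1
  rw [Finset.sum_Icc_succ_top (by omega : 1 ≤ n + 1)]
  rw [← hSdef]
  set T : ℚ := ∑ m ∈ Finset.Icc 1 (k - 1),
      (m : ℚ) / (X * ((k * (n + 1) - m : ℕ) : ℚ)) with hTdef
  -- key recursion for a
  have H1 : X ^ (k - 1) * A1 = (k : ℚ) * P * A0 := a_rec k n (by omega)
  have H1' : X ^ (k - 2) * A1 * X = (k : ℚ) * P * A0 := by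
    rw [mul_right_comm, ← H1]
    congr 1
    rw [← pow_succ]
    congr 1
    omega
  -- pointwise identity and reindexing
  have key : ∀ m ∈ Finset.Icc 1 (k - 1),
      P * ((m : ℚ) / (X * ((k * (n + 1) - m : ℕ) : ℚ))) * X + P
        = (∏ l ∈ (Finset.Icc 1 (k - 1)).erase (k - m), ((k * n + l : ℕ) : ℚ)) * (k : ℚ) * X := by
    intro m hm
    rw [Finset.mem_Icc] at hm
    have e1 : k * (n + 1) - m = k * n + (k - m) := by
      have h : k * (n + 1) = k * n + k := by ring
      omega
    have hmem : k - m ∈ Finset.Icc 1 (k - 1) := by rw [Finset.mem_Icc]; omega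
    have hE : (∏ l ∈ (Finset.Icc 1 (k - 1)).erase (k - m), ((k * n + l : ℕ) : ℚ))
        * ((k * n + (k - m) : ℕ) : ℚ) = P :=
      Finset.prod_erase_mul (Finset.Icc 1 (k - 1)) (fun l => ((k * n + l : ℕ) : ℚ)) hmem
    have hc0 : ((k * n + (k - m) : ℕ) : ℚ) ≠ 0 := Nat.cast_ne_zero.mpr (by omega)
    have hmc : (m : ℚ) + ((k * n + (k - m) : ℕ) : ℚ) = (k : ℚ) * X := by
      rw [hXdef]
      push_cast [Nat.cast_sub (by omega : m ≤ k)]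
      ring
    rw [e1, ← hE]
    set E : ℚ := ∏ l ∈ (Finset.Icc 1 (k - 1)).erase (k - m), ((k * n + l : ℕ) : ℚ) with hEdef
    set c : ℚ := ((k * n + (k - m) : ℕ) : ℚ) with hcdef
    field_simp
    linear_combination E * hmc
  have H3 : P * T * X + ((k : ℚ) - 1) * P = Qs * X := by
    have h31 : ((k : ℚ) - 1) * P = ∑ _m ∈ Finset.Icc 1 (k - 1), P := by
      rw [Finset.sum_const, Nat.card_Icc, nsmul_eq_mul]
      congr 1
      push_cast [Nat.cast_sub (by omega : 1 ≤ k)]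
      ring
    have h32 : P * T * X = ∑ m ∈ Finset.Icc 1 (k - 1),
        P * ((m : ℚ) / (X * ((k * (n + 1) - m : ℕ) : ℚ))) * X := by
      rw [hTdef, Finset.mul_sum, Finset.sum_mul]
    have h33 : Qs * X = ∑ m ∈ Finset.Icc 1 (k - 1),
        (∏ l ∈ (Finset.Icc 1 (k - 1)).erase m, ((k * n + l : ℕ) : ℚ)) * (k : ℚ) * X := by
      rw [hQdef, Finset.sum_mul]
    rw [h31, h32, h33, ← Finset.sum_add_distrib]
    refine Finset.sum_nbij' (fun m => k - m) (fun m => k - m) ?_ ?_ ?_ ?_ key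
    · intro m hm; rw [Finset.mem_Icc] at hm; simp only [Finset.mem_Icc]; omega
    · intro m hm; rw [Finset.mem_Icc] at hm; simp only [Finset.mem_Icc]; omega
    · intro m hm; rw [Finset.mem_Icc] at hm; show k - (k - m) = m; omega
    · intro m hm; rw [Finset.mem_Icc] at hm; show k - (k - m) = m; omega
  apply mul_right_cancel₀ hX
  linear_combination (S * X + T * X) * H1 + ((k : ℚ) - 1) * H1' + ((k : ℚ) * A0) * H3
end
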